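/- arXiv:1708.04385 — 4 statements merged into one kernel-verified Lean document; each statement's English description precedes it below -/
import Mathlib

section
/- In the one-dimensional two-parameter transmission problem with h₀ = 0 and h₁ > 0, the interior solution u_int(x; ε, σ) = x² − Ax + B, where A = (σ + 2h₁ε + h₁²ε²)/(σ + h₁ε) and B = (σ + h₁ε)/(σ + h₁ε) = 1 (the formulas with h₀ = 0), converges pointwise on [0,1] to (x − 1)² as ε → 0⁺ and σ/ε → 0⁺. In particular the limit function v(x) = (x−1)² satisfies v'' = 2, v(0) = 1, and the Neumann condition v'(1) = 0. -/
/-- with `h₀ = 0`, `h₁ > 0`, the interior solution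
`u_int(x;ε,σ) = x² − Ax + B` converges pointwise on `[0,1]` to `(x−1)²` as
`ε → 0⁺`, `σ/ε → 0⁺`; the limit `v(x) = (x−1)²` satisfies `v'' = 2`, `v(0) = 1`
and the Neumann condition `v'(1) = 0`. -/
theorem stmt_6 (h₁ : ℝ) (hh₁ : 0 < h₁) :
    (∀ x ∈ Set.Icc (0 : ℝ) 1, ∀ δ > (0 : ℝ), ∃ ε₁ > (0 : ℝ), ∃ lam₁ > (0 : ℝ),
      ∀ ε σ : ℝ, 0 < ε → 0 < σ → ε < ε₁ → σ / ε < lam₁ →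
        |(x ^ 2 - ((σ + 2 * h₁ * ε + h₁ ^ 2 * ε ^ 2) / (σ + h₁ * ε)) * x
            + (σ + h₁ * ε) / (σ + h₁ * ε))
          - (x - 1) ^ 2| < δ) ∧
    (∀ x : ℝ, deriv (deriv (fun y : ℝ => (y - 1) ^ 2)) x = 2) ∧
    ((fun y : ℝ => (y - 1) ^ 2) 0 = 1) ∧
    deriv (fun y : ℝ => (y - 1) ^ 2) 1 = 0 := by
  have hd : ∀ x : ℝ, HasDerivAt (fun y : ℝ => (y - 1) ^ 2) (2 * (x - 1)) x := by
    intro x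
    have := ((hasDerivAt_id x).sub_const 1).pow 2
    simpa [mul_comm, Pi.pow_def] using this
  have hderiv : deriv (fun y : ℝ => (y - 1) ^ 2) = fun x => 2 * (x - 1) := by
    funext x; exact (hd x).deriv
  refine ⟨?_, ?_, by norm_num, by rw [hderiv]; norm_num⟩
  · intro x hx δ hδ
    refine ⟨δ / (2 * h₁), by positivity, h₁ * δ / 2, by positivity, ?_⟩
    intro ε σ hε hσ hε1 hσε
    have hs : 0 < σ + h₁ * ε := by positivity
    have key : (x ^ 2 - ((σ + 2 * h₁ * ε + h₁ ^ 2 * ε ^ 2) / (σ + h₁ * ε)) * x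
        + (σ + h₁ * ε) / (σ + h₁ * ε)) - (x - 1) ^ 2
        = (σ - h₁ ^ 2 * ε ^ 2) / (σ + h₁ * ε) * x := by
      field_simp
      ring
    rw [key, abs_mul, abs_div, abs_of_pos hs]
    have hax : |x| ≤ 1 := abs_le.mpr ⟨by linarith [hx.1], hx.2⟩
    have h1 : |σ - h₁ ^ 2 * ε ^ 2| ≤ σ + h₁ ^ 2 * ε ^ 2 := by
      rw [abs_le]; constructor <;> nlinarith
    calc |σ - h₁ ^ 2 * ε ^ 2| / (σ + h₁ * ε) * |x|
        ≤ (σ + h₁ ^ 2 * ε ^ 2) / (σ + h₁ * ε) * 1 := by gcongr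
      _ < δ := by
          rw [mul_one, div_lt_iff₀ hs]
          have hσ' : σ < h₁ * δ / 2 * ε := (div_lt_iff₀ hε).mp hσε
          have hε1' : 2 * h₁ * ε < δ := by
            have := (lt_div_iff₀ (by positivity : (0:ℝ) < 2 * h₁)).mp hε1
            linarith
          nlinarith [mul_pos hδ hσ, mul_pos hh₁ hε,
            mul_lt_mul_of_pos_left hε1' (mul_pos hh₁ hε)]
  · intro x
    rw [hderiv]
    have : HasDerivAt (fun x : ℝ => 2 * (x - 1)) 2 x := by
      simpa using ((hasDerivAt_id x).sub_const 1).const_mul 2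
    exact this.deriv
end

section
/- In the one-dimensional two-parameter transmission problem with h₀ > 0 and h₁ > 0, set λ = σ/ε. Then for every fixed x ∈ [0,1], λ · u_int(x; ε, σ) converges to −2h₀h₁/(h₀ + h₁) in the joint limit ε → 0⁺ and λ = σ/ε → 0⁺. In particular u_int blows up at rate λ^{−1} in this regime. -/
/-- with `h₀, h₁ > 0` and `λ = σ/ε`, for every fixed `x ∈ [0,1]`,
`λ · u_int(x;ε,σ)` converges to `−2h₀h₁/(h₀+h₁)` in the joint limit `ε → 0⁺`,
`σ/ε → 0⁺`. -/
theorem stmt_7 (h₀ h₁ : ℝ) (hh₀ : 0 < h₀) (hh₁ : 0 < h₁)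
    (x : ℝ) (hx : x ∈ Set.Icc (0 : ℝ) 1) (δ : ℝ) (hδ : 0 < δ) :
    ∃ ε₁ > (0 : ℝ), ∃ lam₁ > (0 : ℝ), ∀ ε σ : ℝ, 0 < ε → 0 < σ → ε < ε₁ → σ / ε < lam₁ →
      |(σ / ε) *
          (x ^ 2
            - ((σ + 2 * h₁ * ε + (h₁ ^ 2 - h₀ ^ 2) * ε ^ 2) / (σ + (h₀ + h₁) * ε)) * x
            + (σ + h₁ * ε - h₀ ^ 2 * ε ^ 2) / (σ + (h₀ + h₁) * ε)
            - (h₀ * h₁ * ε / σ) * ((2 * ε + (h₀ + h₁) * ε ^ 2) / (σ + (h₀ + h₁) * ε)))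
        + 2 * h₀ * h₁ / (h₀ + h₁)| < δ := by
  have hsum : (0:ℝ) < h₀ + h₁ := by linarith
  set F : ℝ × ℝ → ℝ := fun p =>
    p.2 * x ^ 2 +
      (-(p.2 * (p.2 + 2 * h₁ + (h₁ ^ 2 - h₀ ^ 2) * p.1) * x)
        + p.2 * (p.2 + h₁ - h₀ ^ 2 * p.1)
        - h₀ * h₁ * (2 + (h₀ + h₁) * p.1)) / (p.2 + h₀ + h₁)
      + 2 * h₀ * h₁ / (h₀ + h₁) with hF
  have hcont : ContinuousAt F (0, 0) := by
    apply ContinuousAt.add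
    apply ContinuousAt.add
    · exact (continuous_snd.mul continuous_const).continuousAt
    · apply ContinuousAt.div
      · fun_prop
      · fun_prop
      · simp; linarith
    · exact continuousAt_const
  have hF0 : F (0, 0) = 0 := by
    simp [hF]
    field_simp
    ring
  rw [Metric.continuousAt_iff] at hcont
  obtain ⟨r, hr, hball⟩ := hcont δ hδ
  refine ⟨r, hr, r, hr, fun ε σ hε hσ hε1 hl1 => ?_⟩
  have hεne : ε ≠ 0 := ne_of_gt hε
  have hσne : σ ≠ 0 := ne_of_gt hσ
  have hD : σ + (h₀ + h₁) * ε > 0 := by positivity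
  have hDne : σ + (h₀ + h₁) * ε ≠ 0 := ne_of_gt hD
  have hl : 0 < σ / ε := div_pos hσ hε
  have hD2 : σ / ε + h₀ + h₁ ≠ 0 := by positivity
  have key : (σ / ε) *
          (x ^ 2
            - ((σ + 2 * h₁ * ε + (h₁ ^ 2 - h₀ ^ 2) * ε ^ 2) / (σ + (h₀ + h₁) * ε)) * x
            + (σ + h₁ * ε - h₀ ^ 2 * ε ^ 2) / (σ + (h₀ + h₁) * ε)
            - (h₀ * h₁ * ε / σ) * ((2 * ε + (h₀ + h₁) * ε ^ 2) / (σ + (h₀ + h₁) * ε)))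
        + 2 * h₀ * h₁ / (h₀ + h₁) = F (ε, σ / ε) := by
    simp only [hF]
    field_simp
    ring
  rw [key]
  have hdist : dist (ε, σ / ε) ((0:ℝ), (0:ℝ)) < r := by
    rw [Prod.dist_eq]
    simp [Real.dist_eq, abs_of_pos hε, abs_of_pos hσ, abs_of_pos hl]
    exact ⟨hε1, hl1⟩
  have := hball hdist
  rwa [hF0, Real.dist_eq, sub_zero] at this
end

section
/- In the one-dimensional two-parameter transmission problem with h₀, h₁ ≥ 0, fix c ∈ (0, ∞). Then for every x ∈ [0,1], in the joint limit ε → 0⁺ with ε/σ → c, the interior solution u_int(x; ε, σ) converges to x² − ((1 + 2h₁c)/(1 + (h₀+h₁)c)) x + (1 + h₁c)/(1 + (h₀+h₁)c) − (2h₀h₁c²)/(1 + (h₀+h₁)c). Moreover this limit function v satisfies v'' = 2 on (0,1) together with the Robin boundary conditions v(0) − c h₀ v'(0) = 1 and v(1) + c h₁ v'(1) = 1. -/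
/-- in the joint limit `ε → 0⁺` with `ε/σ → c ∈ (0,∞)`, the interior
solution converges pointwise on `[0,1]` to
`v(x) = x² − ((1+2h₁c)/(1+(h₀+h₁)c))x + (1+h₁c)/(1+(h₀+h₁)c) − 2h₀h₁c²/(1+(h₀+h₁)c)`,
which satisfies `v'' = 2` and the Robin conditions `v(0) − ch₀v'(0) = 1`,
`v(1) + ch₁v'(1) = 1`. -/
theorem stmt_8 (h₀ h₁ c : ℝ) (hh₀ : 0 ≤ h₀) (hh₁ : 0 ≤ h₁) (hc : 0 < c) :
    let v : ℝ → ℝ := fun x =>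
      x ^ 2 - ((1 + 2 * h₁ * c) / (1 + (h₀ + h₁) * c)) * x
        + (1 + h₁ * c) / (1 + (h₀ + h₁) * c)
        - 2 * h₀ * h₁ * c ^ 2 / (1 + (h₀ + h₁) * c)
    (∀ x ∈ Set.Icc (0 : ℝ) 1, ∀ δ > (0 : ℝ), ∃ ε₁ > (0 : ℝ), ∃ η > (0 : ℝ),
      ∀ ε σ : ℝ, 0 < ε → 0 < σ → ε < ε₁ → |ε / σ - c| < η →
        |(x ^ 2
            - ((σ + 2 * h₁ * ε + (h₁ ^ 2 - h₀ ^ 2) * ε ^ 2) / (σ + (h₀ + h₁) * ε)) * x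
            + (σ + h₁ * ε - h₀ ^ 2 * ε ^ 2) / (σ + (h₀ + h₁) * ε)
            - (h₀ * h₁ * ε / σ) * ((2 * ε + (h₀ + h₁) * ε ^ 2) / (σ + (h₀ + h₁) * ε)))
          - v x| < δ) ∧
    (∀ x ∈ Set.Ioo (0 : ℝ) 1, deriv (deriv v) x = 2) ∧
    (v 0 - c * h₀ * deriv v 0 = 1) ∧
    (v 1 + c * h₁ * deriv v 1 = 1) := by
  intro v
  have hD : (0:ℝ) < 1 + (h₀ + h₁) * c := by positivity
  have hD' : (1:ℝ) + (h₀ + h₁) * c ≠ 0 := ne_of_gt hD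
  -- derivative facts
  have hder : ∀ y : ℝ, HasDerivAt v (2 * y - (1 + 2 * h₁ * c) / (1 + (h₀ + h₁) * c)) y := by
    intro y
    have h1 : HasDerivAt (fun y : ℝ => y ^ 2) (2 * y) y := by
      simpa using hasDerivAt_pow 2 y
    have h2 : HasDerivAt (fun y : ℝ => ((1 + 2 * h₁ * c) / (1 + (h₀ + h₁) * c)) * y)
        ((1 + 2 * h₁ * c) / (1 + (h₀ + h₁) * c)) y := by
      simpa using (hasDerivAt_id y).const_mul ((1 + 2 * h₁ * c) / (1 + (h₀ + h₁) * c))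
    simpa [v] using ((h1.sub h2).add_const
      ((1 + h₁ * c) / (1 + (h₀ + h₁) * c))).sub_const
      (2 * h₀ * h₁ * c ^ 2 / (1 + (h₀ + h₁) * c))
  have hderiv : deriv v = fun y => 2 * y - (1 + 2 * h₁ * c) / (1 + (h₀ + h₁) * c) :=
    funext fun y => (hder y).deriv
  refine ⟨?_, ?_, ?_, ?_⟩
  · intro x hx δ hδ
    set g : ℝ × ℝ → ℝ := fun p =>
      x ^ 2 + (-(1 + 2 * h₁ * p.2 + (h₁ ^ 2 - h₀ ^ 2) * p.1 * p.2) * x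
        + (1 + h₁ * p.2 - h₀ ^ 2 * p.1 * p.2)
        - h₀ * h₁ * p.2 * (2 * p.2 + (h₀ + h₁) * p.1 * p.2)) / (1 + (h₀ + h₁) * p.2)
      with hg
    have hgc : ContinuousAt g ((0 : ℝ), c) := by
      apply ContinuousAt.add continuousAt_const
      apply ContinuousAt.div
      · fun_prop
      · fun_prop
      · simpa using hD'
    have hgv : g ((0 : ℝ), c) = v x := by
      simp only [hg, v]
      field_simp
      ring
    rw [Metric.continuousAt_iff] at hgc
    obtain ⟨r, hr, hball⟩ := hgc δ hδ
    refine ⟨r / 2, by positivity, r / 2, by positivity, fun ε σ hε hσ hε₁ hη => ?_⟩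
    have hσε : (0:ℝ) < σ + (h₀ + h₁) * ε := by positivity
    have hden : (1:ℝ) + (h₀ + h₁) * (ε / σ) ≠ 0 := by
      have : (1:ℝ) + (h₀ + h₁) * (ε / σ) = (σ + (h₀ + h₁) * ε) / σ := by
        field_simp
      rw [this]
      positivity
    have hF : (x ^ 2
            - ((σ + 2 * h₁ * ε + (h₁ ^ 2 - h₀ ^ 2) * ε ^ 2) / (σ + (h₀ + h₁) * ε)) * x
            + (σ + h₁ * ε - h₀ ^ 2 * ε ^ 2) / (σ + (h₀ + h₁) * ε)
            - (h₀ * h₁ * ε / σ) * ((2 * ε + (h₀ + h₁) * ε ^ 2) / (σ + (h₀ + h₁) * ε)))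
          = g (ε, ε / σ) := by
      simp only [hg]
      field_simp
      ring
    have hdist : dist ((ε, ε / σ) : ℝ × ℝ) ((0 : ℝ), c) < r := by
      rw [Prod.dist_eq]
      apply max_lt
      · have h1 : dist (((ε, ε / σ) : ℝ × ℝ)).1 ((((0:ℝ), c)) : ℝ × ℝ).1 = ε := by
          simp [Real.dist_eq, abs_of_pos hε]
        rw [h1]; linarith
      · have h2 : dist (((ε, ε / σ) : ℝ × ℝ)).2 ((((0:ℝ), c)) : ℝ × ℝ).2 = |ε / σ - c| := by
          simp [Real.dist_eq]
        rw [h2]; linarith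
    have := hball hdist
    rw [Real.dist_eq, hgv] at this
    rw [hF]
    exact this
  · intro x hx
    rw [hderiv]
    have h2 : HasDerivAt (fun y : ℝ => 2 * y - (1 + 2 * h₁ * c) / (1 + (h₀ + h₁) * c))
        (2 : ℝ) x := by
      simpa using ((hasDerivAt_id x).const_mul (2:ℝ)).sub_const
        ((1 + 2 * h₁ * c) / (1 + (h₀ + h₁) * c))
    exact h2.deriv
  · rw [hderiv]
    simp only [v]
    field_simp
    ring
  · rw [hderiv]
    simp only [v]
    field_simp
    ring
end

section
/- Let N ≥ 0, h ∈ ℝ, x ∈ ℝ, let g : ℝ → ℝ and w_0, …, w_N : ℝ → ℝ be real-analytic in a neighborhood of x, and suppose that ∑_{n=0}^N ε^n w_n(x + εh) = g(x + εh) + o(ε^N) as ε → 0. Then w_0(x) = g(x) and, for every 1 ≤ m ≤ N, w_m(x) = (h^m/m!) g^{(m)}(x) − ∑_{k=1}^{m} (h^k/k!) w_{m−k}^{(k)}(x). -/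
/-!
By analyticity, `w_n(x + εh)` and `g(x + εh)` agree with their Taylor polynomials in `ε` up to
`O(ε^(N+1))`, so the hypothesis says that the polynomial
`P(ε) = ∑_n εⁿ Tₙ(ε) - T_g(ε)` is `o(ε^N)`. A polynomial that is `o(ε^N)` at `0` has vanishing
coefficients up to degree `N` (peel off the lowest nonzero term), and the coefficient of `ε^m`
in `P` is `∑_{n+k=m} h^k/k! w_n^{(k)}(x) - h^m/m! g^{(m)}(x)`.
-/

open Asymptotics Filter Topology Polynomial Finset Nat

theorem Polynomial.coeff_sum_X_pow_mul {R : Type*} [Semiring R] (q : ℕ → R[X]) {N m : ℕ}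
    (hm : m ≤ N) :
    (∑ n ∈ range (N + 1), X ^ n * q n).coeff m = ∑ k ∈ range (m + 1), (q (m - k)).coeff k := by
  have hrange : (range (N + 1)).filter (· ≤ m) = range (m + 1) := by
    ext n; simp only [mem_filter, mem_range]; omega
  simp_rw [finsetSum_coeff, coeff_X_pow_mul', ← sum_filter, hrange]
  rw [← sum_range_reflect]
  refine sum_congr rfl fun k hk => ?_
  rw [mem_range] at hk
  congr 2; omega

section

variable {𝕜 : Type*} [NontriviallyNormedField 𝕜]

theorem eq_zero_of_pow_mul_isLittleO_pow {f : 𝕜 → 𝕜} (hf : ContinuousAt f 0) {m : ℕ}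
    (h : (fun ε => ε ^ m * f ε) =o[𝓝 0] fun ε => ε ^ m) : f 0 = 0 := by
  have hlim : Tendsto f (𝓝[≠] 0) (𝓝 0) := by
    refine (h.tendsto_div_nhds_zero.mono_left nhdsWithin_le_nhds).congr' ?_
    filter_upwards [self_mem_nhdsWithin] with ε hε
    exact mul_div_cancel_left₀ _ (pow_ne_zero m hε)
  exact tendsto_nhds_unique (hf.tendsto.mono_left nhdsWithin_le_nhds) hlim

theorem Asymptotics.isBigO_pow_pow_of_le {m N : ℕ} (hm : m ≤ N) :
    (fun ε : 𝕜 => ε ^ N) =O[𝓝 0] fun ε => ε ^ m := by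
  rcases hm.eq_or_lt with rfl | hlt
  · exact isBigO_refl _ _
  · exact (isLittleO_pow_pow hlt).isBigO

theorem Polynomial.coeff_eq_zero_of_eval_isLittleO_pow {p : 𝕜[X]} {N : ℕ}
    (hp : (fun ε => p.eval ε) =o[𝓝 0] fun ε => ε ^ N) {m : ℕ} (hm : m ≤ N) :
    p.coeff m = 0 := by
  induction m using Nat.strong_induction_on with
  | _ m ih =>
  obtain ⟨q, rfl⟩ : X ^ m ∣ p := X_pow_dvd_iff.2 fun d hd => ih d hd (hd.le.trans hm)
  have hq : (fun ε => ε ^ m * q.eval ε) =o[𝓝 0] fun ε => ε ^ m := by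
    simpa using hp.trans_isBigO (isBigO_pow_pow_of_le hm)
  rw [coeff_X_pow_mul', if_pos le_rfl, Nat.sub_self, coeff_zero_eq_eval_zero]
  exact eq_zero_of_pow_mul_isLittleO_pow q.continuous.continuousAt hq

noncomputable def taylorPolyAlong (f : 𝕜 → 𝕜) (x h : 𝕜) (K : ℕ) : 𝕜[X] :=
  ∑ k ∈ range K, C (iteratedDeriv k f x / k ! * h ^ k) * X ^ k

theorem taylorPolyAlong_coeff (f : 𝕜 → 𝕜) (x h : 𝕜) {K k : ℕ} (hk : k < K) :
    (taylorPolyAlong f x h K).coeff k = iteratedDeriv k f x / k ! * h ^ k := by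
  simp only [taylorPolyAlong, finsetSum_coeff, coeff_C_mul_X_pow, sum_ite_eq, mem_range, hk,
    if_true]

theorem AnalyticAt.isBigO_sub_taylorPolyAlong [CompleteSpace 𝕜] [CharZero 𝕜] {f : 𝕜 → 𝕜} {x : 𝕜}
    (hf : AnalyticAt 𝕜 f x) (h : 𝕜) (K : ℕ) :
    (fun ε => f (x + ε * h) - (taylorPolyAlong f x h K).eval ε) =O[𝓝 0] fun ε => ε ^ K := by
  have hlim : Tendsto (fun ε : 𝕜 => ε * h) (𝓝 0) (𝓝 0) := by
    simpa using (continuous_mul_const h).tendsto 0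
  have hscale : (fun ε : 𝕜 => ‖ε * h‖ ^ K) =O[𝓝 0] fun ε => ε ^ K :=
    .of_bound (‖h‖ ^ K) (.of_forall fun ε => by simp [mul_pow, mul_comm])
  refine (((hf.hasFPowerSeriesAt.isBigO_sub_partialSum_pow K).comp_tendsto hlim).trans
    hscale).congr_left fun ε => ?_
  simp [FormalMultilinearSeries.partialSum, taylorPolyAlong, eval_finsetSum, mul_pow, mul_comm,
    mul_left_comm, mul_assoc]

theorem sum_pow_mul_iteratedDeriv_eq_of_isLittleO [CompleteSpace 𝕜] [CharZero 𝕜] {N : ℕ}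
    {h x : 𝕜} {g : 𝕜 → 𝕜} {w : ℕ → 𝕜 → 𝕜} (hg : AnalyticAt 𝕜 g x)
    (hw : ∀ n ≤ N, AnalyticAt 𝕜 (w n) x)
    (hmatch : (fun ε => (∑ n ∈ range (N + 1), ε ^ n * w n (x + ε * h)) - g (x + ε * h))
      =o[𝓝 0] fun ε => ε ^ N) {m : ℕ} (hm : m ≤ N) :
    ∑ k ∈ range (m + 1), h ^ k / k ! * iteratedDeriv k (w (m - k)) x
      = h ^ m / m ! * iteratedDeriv m g x := by
  set P := ∑ n ∈ range (N + 1), X ^ n * taylorPolyAlong (w n) x h (N + 1)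
    - taylorPolyAlong g x h (N + 1)
  have hrem : (fun ε => (∑ n ∈ range (N + 1), ε ^ n * w n (x + ε * h)) - g (x + ε * h)
      - P.eval ε) =O[𝓝 0] fun ε => ε ^ (N + 1) := by
    have hsum := IsBigO.fun_sum fun n hn => (((continuous_pow n).tendsto 0).isBigO_one 𝕜).mul
      ((hw n (Nat.lt_succ_iff.1 (mem_range.1 hn))).isBigO_sub_taylorPolyAlong h (N + 1))
    simp_rw [one_mul] at hsum
    refine (hsum.sub (hg.isBigO_sub_taylorPolyAlong h (N + 1))).congr_left fun ε => ?_
    simp only [P, eval_sub, eval_finsetSum, eval_mul, eval_pow, eval_X, mul_sub, sum_sub_distrib]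
    ring
  have hP : (fun ε => P.eval ε) =o[𝓝 0] fun ε => ε ^ N :=
    (hmatch.sub (hrem.trans_isLittleO (isLittleO_pow_pow N.lt_succ_self))).congr_left
      fun ε => by ring
  have hcoeff := P.coeff_eq_zero_of_eval_isLittleO_pow hP hm
  rw [coeff_sub, coeff_sum_X_pow_mul _ hm, taylorPolyAlong_coeff _ _ _ (by omega),
    sub_eq_zero] at hcoeff
  rw [show h ^ m / m ! * iteratedDeriv m g x = iteratedDeriv m g x / m ! * h ^ m by ring,
    ← hcoeff]
  refine sum_congr rfl fun k hk => ?_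
  rw [taylorPolyAlong_coeff _ _ _ (by rw [mem_range] at hk; omega)]
  ring

end

/-- Taylor-matching identity. If `g` and `w₀,…,w_N` are real-analytic
near `x` and `∑_{n=0}^N εⁿ wₙ(x+εh) = g(x+εh) + o(ε^N)` as `ε → 0`, then
`w₀(x) = g(x)` and for `1 ≤ m ≤ N`,
`w_m(x) = (h^m/m!) g^{(m)}(x) − ∑_{k=1}^m (h^k/k!) w_{m−k}^{(k)}(x)`. -/
theorem stmt_13 (N : ℕ) (h x : ℝ) (g : ℝ → ℝ) (w : ℕ → ℝ → ℝ)
    (hg : AnalyticAt ℝ g x) (hw : ∀ n ≤ N, AnalyticAt ℝ (w n) x)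
    (hmatch :
      (fun ε : ℝ =>
          (∑ n ∈ Finset.range (N + 1), ε ^ n * w n (x + ε * h)) - g (x + ε * h))
        =o[nhds 0] fun ε : ℝ => ε ^ N) :
    w 0 x = g x ∧
    ∀ m, 1 ≤ m → m ≤ N →
      w m x = (h ^ m / m.factorial) * iteratedDeriv m g x
        - ∑ k ∈ Finset.Icc 1 m, (h ^ k / k.factorial) * iteratedDeriv k (w (m - k)) x := by
  have hcoeff m (hm : m ≤ N) := sum_pow_mul_iteratedDeriv_eq_of_isLittleO hg hw hmatch hm
  refine ⟨by simpa using hcoeff 0 N.zero_le, fun m _ hmN => ?_⟩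
  rw [← hcoeff m hmN, sum_range_succ', ← Ico_add_one_right_eq_Icc, sum_Ico_eq_sum_range,
    Nat.add_sub_cancel]
  simp only [add_comm 1, pow_zero, factorial_zero, cast_one, div_one, one_mul, iteratedDeriv_zero,
    Nat.sub_zero, add_sub_cancel_left]
end
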